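/- Let a > 0 and b ∈ ℝ, and set ω₋ = b/√(π·a), ω₊ = (a+b)/√(π·a), and η = b²/(2a). Then X₀(a,b) = √(π/a)·( cos(η)·(C(ω₊) − C(ω₋)) + sin(η)·(S(ω₊) − S(ω₋)) ) and Y₀(a,b) = √(π/a)·( cos(η)·(S(ω₊) − S(ω₋)) − sin(η)·(C(ω₊) − C(ω₋)) ), where C and S are the Fresnel cosine and sine integrals. -/

import Mathlib

open Real

/-- `X₀ a b = ∫₀¹ cos(a τ²/2 + b τ) dτ` -/
noncomputable def X₀ (a b : ℝ) : ℝ := ∫ τ in (0:ℝ)..1, Real.cos (a * τ ^ 2 / 2 + b * τ)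

/-- `Y₀ a b = ∫₀¹ sin(a τ²/2 + b τ) dτ` -/
noncomputable def Y₀ (a b : ℝ) : ℝ := ∫ τ in (0:ℝ)..1, Real.sin (a * τ ^ 2 / 2 + b * τ)

/-- Fresnel cosine integral `C(t) = ∫₀^t cos(π τ²/2) dτ`. -/
noncomputable def fresnelC (t : ℝ) : ℝ := ∫ τ in (0:ℝ)..t, Real.cos (π * τ ^ 2 / 2)

/-- Fresnel sine integral `S(t) = ∫₀^t sin(π τ²/2) dτ`. -/
noncomputable def fresnelS (t : ℝ) : ℝ := ∫ τ in (0:ℝ)..t, Real.sin (π * τ ^ 2 / 2)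

/-!
Completing the square, `a τ²/2 + b τ = π (c τ + d)²/2 - η` with `c = a/√(π a)`, `d = b/√(π a)`
and `η = b²/(2a)`, so the substitution `u = c τ + d` turns `X₀`, `Y₀` into integrals of
`cos (π u²/2 - η)`, `sin (π u²/2 - η)` over `[ω₋, ω₊]`; expanding these by the subtraction
formulas leaves Fresnel integrals.
-/

lemma continuous_cos_fresnel_phase : Continuous fun x : ℝ => cos (π * x ^ 2 / 2) := by
  fun_prop

lemma continuous_sin_fresnel_phase : Continuous fun x : ℝ => sin (π * x ^ 2 / 2) := by
  fun_prop

lemma fresnelC_sub (u v : ℝ) :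
    fresnelC v - fresnelC u = ∫ x in u..v, cos (π * x ^ 2 / 2) :=
  intervalIntegral.integral_interval_sub_left (continuous_cos_fresnel_phase.intervalIntegrable _ _)
    (continuous_cos_fresnel_phase.intervalIntegrable _ _)

lemma fresnelS_sub (u v : ℝ) :
    fresnelS v - fresnelS u = ∫ x in u..v, sin (π * x ^ 2 / 2) :=
  intervalIntegral.integral_interval_sub_left (continuous_sin_fresnel_phase.intervalIntegrable _ _)
    (continuous_sin_fresnel_phase.intervalIntegrable _ _)

section TrigShift

open MeasureTheory

variable {g : ℝ → ℝ} (hg : Continuous g) (u v η : ℝ)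
include hg

lemma integral_cos_sub_const :
    ∫ x in u..v, cos (g x - η) =
      cos η * (∫ x in u..v, cos (g x)) + sin η * ∫ x in u..v, sin (g x) := by
  have hcos : IntervalIntegrable (fun x => cos (g x)) volume u v :=
    (continuous_cos.comp hg).intervalIntegrable u v
  have hsin : IntervalIntegrable (fun x => sin (g x)) volume u v :=
    (continuous_sin.comp hg).intervalIntegrable u v
  simp only [cos_sub, mul_comm (cos (g _)) (cos η), mul_comm (sin (g _)) (sin η)]
  rw [intervalIntegral.integral_add (hcos.const_mul _) (hsin.const_mul _),
    intervalIntegral.integral_const_mul, intervalIntegral.integral_const_mul]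

lemma integral_sin_sub_const :
    ∫ x in u..v, sin (g x - η) =
      cos η * (∫ x in u..v, sin (g x)) - sin η * ∫ x in u..v, cos (g x) := by
  have hcos : IntervalIntegrable (fun x => cos (g x)) volume u v :=
    (continuous_cos.comp hg).intervalIntegrable u v
  have hsin : IntervalIntegrable (fun x => sin (g x)) volume u v :=
    (continuous_sin.comp hg).intervalIntegrable u v
  simp only [sin_sub, mul_comm (sin (g _)) (cos η), mul_comm (cos (g _)) (sin η)]
  rw [intervalIntegral.integral_sub (hsin.const_mul _) (hcos.const_mul _),
    intervalIntegral.integral_const_mul, intervalIntegral.integral_const_mul]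

end TrigShift

section QuadraticPhase

variable {a : ℝ} (ha : 0 < a) (b : ℝ)
include ha

lemma quadratic_phase_eq_fresnel_phase (τ : ℝ) :
    a * τ ^ 2 / 2 + b * τ =
      π * (a / √(π * a) * τ + b / √(π * a)) ^ 2 / 2 - b ^ 2 / (2 * a) := by
  have hs0 : √(π * a) ≠ 0 := by have := pi_pos; positivity
  have hs : √(a * π) ^ 2 = a * π := sq_sqrt (by positivity)
  field_simp
  linear_combination (a * τ * (a * τ + 2 * b) + b ^ 2) * hs

lemma inv_div_sqrt_pi_mul : (a / √(π * a))⁻¹ = √(π / a) := by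
  rw [inv_div, div_eq_iff ha.ne', ← sqrt_sq ha.le, ← sqrt_mul (by positivity),
    sqrt_sq ha.le]
  field_simp

theorem integral_comp_quadratic_phase (f : ℝ → ℝ) :
    ∫ τ in (0:ℝ)..1, f (a * τ ^ 2 / 2 + b * τ) =
      √(π / a) * ∫ u in b / √(π * a)..(a + b) / √(π * a), f (π * u ^ 2 / 2 - b ^ 2 / (2 * a)) := by
  have hc : a / √(π * a) ≠ 0 := by have := pi_pos; positivity
  simp only [quadratic_phase_eq_fresnel_phase ha b]
  rw [intervalIntegral.integral_comp_mul_add (fun u => f (π * u ^ 2 / 2 - b ^ 2 / (2 * a))) hc,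
    smul_eq_mul, inv_div_sqrt_pi_mul ha, mul_zero, zero_add, mul_one, add_div]

end QuadraticPhase

theorem stmt19 (a b : ℝ) (ha : 0 < a)
    (ωm ωp η : ℝ)
    (hωm : ωm = b / Real.sqrt (π * a))
    (hωp : ωp = (a + b) / Real.sqrt (π * a))
    (hη : η = b ^ 2 / (2 * a)) :
    X₀ a b = Real.sqrt (π / a) *
      (Real.cos η * (fresnelC ωp - fresnelC ωm) + Real.sin η * (fresnelS ωp - fresnelS ωm)) ∧
    Y₀ a b = Real.sqrt (π / a) *
      (Real.cos η * (fresnelS ωp - fresnelS ωm) - Real.sin η * (fresnelC ωp - fresnelC ωm)) := by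
  have hphase : Continuous fun u : ℝ => π * u ^ 2 / 2 := by fun_prop
  subst hωm hωp hη
  rw [fresnelC_sub, fresnelS_sub, X₀, Y₀, integral_comp_quadratic_phase ha b cos,
    integral_comp_quadratic_phase ha b sin, integral_cos_sub_const hphase,
    integral_sin_sub_const hphase]
  exact ⟨rfl, rfl⟩
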